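/- Let n ≥ 1, p > n/(n+2), p ≠ 1, and σ > 0, and let B_σ be the Barenblatt profile of parameter σ, normalized so that σ ∫ B_σ^p dy = (1/n) ∫ |y|² B_σ(y) dy. Then the generalized Fisher information of B_σ equals I_p(B_σ) = n/σ; moreover, if E₀ = ∫|y|² B_σ(y) dy denotes its second moment, then n²/E₀ = I_p(B_σ)/∫ B_σ^p dy. -/

import Mathlib

open MeasureTheory Real Filter
open scoped Topology

noncomputable section

/-- The generalized Fisher information of order `p`:
`I_p(f) = (∫ f^p)⁻¹ ∫_{f>0} |∇(f^p)|²/f`. -/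
def fisherp (n : ℕ) (p : ℝ) (f : EuclideanSpace ℝ (Fin n) → ℝ) : ℝ :=
  (∫ x, f x ^ p)⁻¹ * ∫ x in {x | 0 < f x}, ‖gradient (fun y => f y ^ p) x‖ ^ 2 / f x

/-- The Barenblatt profile on `ℝⁿ` with parameters `σ` and `C`:
`(C + ((1-p)/p)|y|²/(2σ))^{1/(p-1)}` for `p < 1`, and
`(C - ((p-1)/p)|y|²/(2σ))₊^{1/(p-1)}` for `p > 1`. -/
def barenblatt (n : ℕ) (p σ C : ℝ) (y : EuclideanSpace ℝ (Fin n)) : ℝ :=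
  if p < 1 then (C + ((1 - p) / p) * ‖y‖ ^ 2 / (2 * σ)) ^ (1 / (p - 1))
  else (max (C - ((p - 1) / p) * ‖y‖ ^ 2 / (2 * σ)) 0) ^ (1 / (p - 1))

lemma hasGradientAt_rpow_normsq {n : ℕ} {C b s : ℝ} (x : EuclideanSpace ℝ (Fin n))
    (h : C + b * ‖x‖ ^ 2 ≠ 0) :
    HasGradientAt (fun y : EuclideanSpace ℝ (Fin n) => (C + b * ‖y‖ ^ 2) ^ s)
      ((2 * (s * (C + b * ‖x‖ ^ 2) ^ (s - 1) * b)) • x) x := by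
  have h1 : HasDerivAt (fun u : ℝ => C + b * u) b (‖x‖ ^ 2) := by
    simpa using ((hasDerivAt_id (‖x‖ ^ 2)).const_mul b).const_add C
  have h2 : HasDerivAt (fun u : ℝ => (C + b * u) ^ s)
      (b * s * (C + b * ‖x‖ ^ 2) ^ (s - 1)) (‖x‖ ^ 2) :=
    h1.rpow_const (Or.inl h)
  have h3 : HasFDerivAt (fun y : EuclideanSpace ℝ (Fin n) => ‖y‖ ^ 2)
      (2 • (innerSL ℝ x)) x := (hasStrictFDerivAt_norm_sq x).hasFDerivAt
  have h4 := h2.comp_hasFDerivAt x h3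
  rw [hasGradientAt_iff_hasFDerivAt]
  refine HasFDerivAt.congr_fderiv h4 ?_
  ext y
  simp [InnerProductSpace.toDual_apply_apply, real_inner_smul_left, ContinuousLinearMap.smul_apply]
  ring


set_option maxHeartbeats 1000000 in
/-- **Fisher information of the Barenblatt profile.**
Let `n ≥ 1`, `p > n/(n+2)`, `p ≠ 1`, `σ > 0`, and let `B_σ` be the (unit-mass) Barenblatt
profile of parameter `σ`, normalized so that `σ ∫ B_σ^p = (1/n) ∫ |y|² B_σ`.  Then
`I_p(B_σ) = n/σ`, and if `E₀ = ∫ |y|² B_σ` denotes its second moment, then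
`n²/E₀ = I_p(B_σ)/∫ B_σ^p`. -/
theorem barenblatt_fisher_information
    (n : ℕ) (hn : 1 ≤ n) (p : ℝ) (hp : (n : ℝ) / (n + 2) < p) (hp1 : p ≠ 1)
    (σ : ℝ) (hσ : 0 < σ) (C : ℝ) (hC : 0 < C)
    (hBmass : (∫ x, barenblatt n p σ C x) = 1)
    (hBnorm : σ * (∫ x, barenblatt n p σ C x ^ p) =
      (1 / (n : ℝ)) * ∫ x, ‖x‖ ^ 2 * barenblatt n p σ C x) :
    fisherp n p (barenblatt n p σ C) = (n : ℝ) / σ ∧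
      (n : ℝ) ^ 2 / (∫ x, ‖x‖ ^ 2 * barenblatt n p σ C x) =
        fisherp n p (barenblatt n p σ C) / ∫ x, barenblatt n p σ C x ^ p := by
  have hn0 : (0:ℝ) < n := by exact_mod_cast hn
  have hp0 : 0 < p := lt_of_le_of_lt (by positivity) hp
  have hpne : p ≠ 0 := ne_of_gt hp0
  have hp1' : p - 1 ≠ 0 := sub_ne_zero.mpr hp1
  have hσ' : σ ≠ 0 := ne_of_gt hσ
  set B := barenblatt n p σ C with hBdef
  set b : ℝ := (1 - p) / p / (2 * σ) with hbdef
  -- Uniform description of the Barenblatt profile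
  have hBeq : ∀ y : EuclideanSpace ℝ (Fin n),
      B y = (max (C + b * ‖y‖ ^ 2) 0) ^ (1 / (p - 1)) := by
    intro y
    have hring : C + ((1 - p) / p) * ‖y‖ ^ 2 / (2 * σ) = C + b * ‖y‖ ^ 2 := by
      rw [hbdef]; ring
    have hring2 : C - ((p - 1) / p) * ‖y‖ ^ 2 / (2 * σ) = C + b * ‖y‖ ^ 2 := by
      rw [hbdef]; ring
    rcases lt_or_gt_of_ne hp1 with h | h
    · have hb0 : 0 ≤ b := by
        rw [hbdef]
        exact div_nonneg (div_nonneg (by linarith) hp0.le) (by linarith)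
      have hpos : 0 ≤ C + b * ‖y‖ ^ 2 := by positivity
      rw [hBdef, barenblatt, if_pos h, hring, max_eq_left hpos]
    · rw [hBdef, barenblatt, if_neg (not_lt.mpr h.le), hring2]
  have hBnonneg : ∀ y, 0 ≤ B y := fun y => by
    rw [hBeq]; positivity
  have hqne : (1 : ℝ) / (p - 1) ≠ 0 := one_div_ne_zero hp1'
  have hSiff : ∀ y, 0 < B y ↔ 0 < C + b * ‖y‖ ^ 2 := by
    intro y
    rw [hBeq y]
    constructor
    · intro hy
      by_contra hc
      push_neg at hc
      rw [max_eq_right hc, Real.zero_rpow hqne] at hy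
      exact lt_irrefl _ hy
    · intro hu
      rw [max_eq_left hu.le]
      exact Real.rpow_pos_of_pos hu _
  set S : Set (EuclideanSpace ℝ (Fin n)) := {x | 0 < C + b * ‖x‖ ^ 2} with hSdef
  have hcontbase : Continuous fun y : EuclideanSpace ℝ (Fin n) => C + b * ‖y‖ ^ 2 :=
    continuous_const.add (continuous_const.mul (continuous_norm.pow 2))
  have hSopen : IsOpen S := isOpen_lt continuous_const hcontbase
  have hSset : {x | 0 < B x} = S := Set.ext fun y => hSiff y
  -- the gradient on S
  have hgrad : ∀ x ∈ S, HasGradientAt (fun y => B y ^ p) ((-(B x) / σ) • x) x := by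
    intro x hx
    have hx' : 0 < C + b * ‖x‖ ^ 2 := hx
    have h0 := hasGradientAt_rpow_normsq (C := C) (b := b) (s := p / (p - 1)) x hx'.ne'
    have hev : (fun y => B y ^ p) =ᶠ[𝓝 x]
        (fun y : EuclideanSpace ℝ (Fin n) => (C + b * ‖y‖ ^ 2) ^ (p / (p - 1))) := by
      filter_upwards [hSopen.mem_nhds hx] with y hy
      have hy' : 0 < C + b * ‖y‖ ^ 2 := hy
      rw [hBeq y, max_eq_left hy'.le, ← Real.rpow_mul hy'.le]
      congr 1
      ring
    have h1 := h0.congr_of_eventuallyEq hev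
    convert h1 using 2
    have hBx : B x = (C + b * ‖x‖ ^ 2) ^ (1 / (p - 1)) := by
      rw [hBeq x, max_eq_left hx'.le]
    have hexp : p / (p - 1) - 1 = 1 / (p - 1) := by field_simp; ring
    rw [hBx, hexp, hbdef]
    field_simp
    ring
  -- integrand on S
  have hintegrand : ∀ x ∈ S, ‖gradient (fun y => B y ^ p) x‖ ^ 2 / B x
      = 1 / σ ^ 2 * (‖x‖ ^ 2 * B x) := by
    intro x hx
    have hBx : 0 < B x := (hSiff x).2 hx
    rw [(hgrad x hx).gradient, norm_smul, Real.norm_eq_abs, mul_pow, sq_abs]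
    field_simp
  have hoff : ∀ x ∉ S, ‖x‖ ^ 2 * B x = 0 := by
    intro x hx
    have hB0 : B x = 0 :=
      le_antisymm (by by_contra hc; exact hx ((hSiff x).1 (lt_of_not_ge hc))) (hBnonneg x)
    rw [hB0, mul_zero]
  have key : (∫ x in {x | 0 < B x}, ‖gradient (fun y => B y ^ p) x‖ ^ 2 / B x)
      = 1 / σ ^ 2 * ∫ x, ‖x‖ ^ 2 * B x := by
    rw [hSset, setIntegral_congr_fun hSopen.measurableSet (fun x hx => hintegrand x hx),
      integral_const_mul, setIntegral_eq_integral_of_forall_compl_eq_zero hoff]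
  -- integrability and positivity of ∫ B^p
  have hintp : Integrable (fun x => B x ^ p) (volume : Measure (EuclideanSpace ℝ (Fin n))) := by
    rcases lt_or_gt_of_ne hp1 with hlt | hgt
    · -- p < 1 : Japanese-bracket comparison
      have hbpos : 0 < b := by
        rw [hbdef]
        exact div_pos (div_pos (by linarith) hp0) (by linarith)
      have hsneg : p / (p - 1) < 0 := div_neg_of_pos_of_neg hp0 (by linarith)
      have hm0 : 0 < min C b := lt_min hC hbpos
      have hnr : (Module.finrank ℝ (EuclideanSpace ℝ (Fin n)) : ℝ) < -(2 * (p / (p - 1))) := by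
        simp only [finrank_euclideanSpace_fin]
        have h1 : (n : ℝ) < p * (n + 2) := (div_lt_iff₀ (by positivity)).mp hp
        have h2 : -(2 * (p / (p - 1))) = 2 * p / (1 - p) := by
          field_simp [show (1:ℝ) - p ≠ 0 by linarith]
          ring
        rw [h2, lt_div_iff₀ (by linarith : (0:ℝ) < 1 - p)]
        nlinarith
      have hg : Integrable
          (fun y : EuclideanSpace ℝ (Fin n) =>
            (min C b) ^ (p / (p - 1)) * (1 + ‖y‖ ^ 2) ^ (p / (p - 1))) volume := by
        have h0 := (integrable_rpow_neg_one_add_norm_sq (μ := volume) hnr).const_mul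
          ((min C b) ^ (p / (p - 1)))
        simpa only [show -(-(2 * (p / (p - 1)))) / 2 = p / (p - 1) by ring] using h0
      have hcontB : Continuous B := by
        have hBfun : B = fun y : EuclideanSpace ℝ (Fin n) =>
            (C + b * ‖y‖ ^ 2) ^ (1 / (p - 1)) := by
          funext y
          have hy' : 0 < C + b * ‖y‖ ^ 2 := by positivity
          rw [hBeq y, max_eq_left hy'.le]
        rw [hBfun]
        exact hcontbase.rpow_const fun y => Or.inl (by positivity)
      refine hg.mono' ((hcontB.rpow_const fun x => Or.inr hp0.le).aestronglyMeasurable)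
        (Eventually.of_forall fun y => ?_)
      have hy' : 0 < C + b * ‖y‖ ^ 2 := by positivity
      have hBy : B y ^ p = (C + b * ‖y‖ ^ 2) ^ (p / (p - 1)) := by
        rw [hBeq y, max_eq_left hy'.le, ← Real.rpow_mul hy'.le]
        congr 1
        ring
      rw [Real.norm_eq_abs, abs_of_nonneg (Real.rpow_nonneg (hBnonneg y) p), hBy]
      have h1 : min C b * (1 + ‖y‖ ^ 2) ≤ C + b * ‖y‖ ^ 2 := by
        have hl := min_le_left C b
        have hr := min_le_right C b
        nlinarith [sq_nonneg ‖y‖]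
      calc (C + b * ‖y‖ ^ 2) ^ (p / (p - 1))
          ≤ (min C b * (1 + ‖y‖ ^ 2)) ^ (p / (p - 1)) :=
            Real.rpow_le_rpow_of_nonpos (by positivity) h1 hsneg.le
        _ = (min C b) ^ (p / (p - 1)) * (1 + ‖y‖ ^ 2) ^ (p / (p - 1)) :=
            Real.mul_rpow hm0.le (by positivity)
    · -- p > 1 : continuous with compact support
      have hbneg : b < 0 := by
        rw [hbdef]
        exact div_neg_of_neg_of_pos (div_neg_of_neg_of_pos (by linarith) hp0) (by linarith)
      have hcontB : Continuous B := by
        have hBfun : B = fun y : EuclideanSpace ℝ (Fin n) =>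
            (max (C + b * ‖y‖ ^ 2) 0) ^ (1 / (p - 1)) := funext hBeq
        rw [hBfun]
        exact (hcontbase.max continuous_const).rpow_const fun y =>
          Or.inr (one_div_nonneg.mpr (by linarith))
      have hcontp : Continuous fun x => B x ^ p := hcontB.rpow_const fun x => Or.inr hp0.le
      have hRnn : (0:ℝ) ≤ C / (-b) := le_of_lt (div_pos hC (by linarith))
      have hcs : HasCompactSupport fun x => B x ^ p := by
        apply HasCompactSupport.intro
          (isCompact_closedBall (0 : EuclideanSpace ℝ (Fin n)) (Real.sqrt (C / (-b))))
        intro y hy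
        rw [Metric.mem_closedBall, dist_zero_right, not_le] at hy
        have h2 : C / (-b) < ‖y‖ ^ 2 := by
          rw [← Real.sq_sqrt hRnn]
          exact pow_lt_pow_left₀ hy (Real.sqrt_nonneg _) two_ne_zero
        have h3 : C + b * ‖y‖ ^ 2 < 0 := by
          rw [div_lt_iff₀ (by linarith : (0:ℝ) < -b)] at h2
          linarith
        have hB0 : B y = 0 := by
          rw [hBeq y, max_eq_right h3.le, Real.zero_rpow hqne]
        rw [hB0, Real.zero_rpow hpne]
      exact hcontp.integrable_of_hasCompactSupport hcs
  have hMpos : 0 < ∫ x, B x ^ p := by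
    rw [integral_pos_iff_support_of_nonneg (fun x => Real.rpow_nonneg (hBnonneg x) p) hintp]
    have hrnn : (0:ℝ) ≤ C / (|b| + 1) := by positivity
    have hrpos : 0 < Real.sqrt (C / (|b| + 1)) := Real.sqrt_pos.mpr (by positivity)
    refine lt_of_lt_of_le
      (Metric.measure_ball_pos volume (0 : EuclideanSpace ℝ (Fin n)) hrpos) (measure_mono ?_)
    intro y hy
    rw [Metric.mem_ball, dist_zero_right] at hy
    have h2 : ‖y‖ ^ 2 < C / (|b| + 1) := by
      rw [← Real.sq_sqrt hrnn]
      exact pow_lt_pow_left₀ hy (norm_nonneg y) two_ne_zero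
    have h4 : ‖y‖ ^ 2 * (|b| + 1) < C := (lt_div_iff₀ (by positivity)).mp h2
    have h5 : -|b| * ‖y‖ ^ 2 ≤ b * ‖y‖ ^ 2 :=
      mul_le_mul_of_nonneg_right (neg_abs_le b) (sq_nonneg ‖y‖)
    have h3 : 0 < C + b * ‖y‖ ^ 2 := by nlinarith [sq_nonneg ‖y‖]
    exact Function.mem_support.mpr (Real.rpow_pos_of_pos ((hSiff y).2 h3) p).ne'
  -- final algebra
  have hE : ∫ x, ‖x‖ ^ 2 * B x = n * (σ * ∫ x, B x ^ p) := by
    field_simp at hBnorm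
    linarith
  have hfish : fisherp n p B = (n : ℝ) / σ := by
    unfold fisherp
    rw [key, hE]
    field_simp
  refine ⟨hfish, ?_⟩
  rw [hfish, hE]
  field_simp
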